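/- arXiv:1602.02577 — 2 statements merged into one kernel-verified Lean document; each statement's English description precedes it below -/
import Mathlib

section
/- As elements of the symmetric group Sym(Triads), the bijections P and L each commute with every transposition T_n and every inversion I_n (n ∈ ℤ/12); that is, P∘T_n = T_n∘P, P∘I_n = I_n∘P, L∘T_n = T_n∘L, and L∘I_n = I_n∘L for all n ∈ ℤ/12. -/
/-- Pitch classes: the integers mod 12. -/
abbrev PC := ZMod 12

/-- Ordered triples of pitch classes. -/
abbrev T3 := PC × PC × PC

/-- The set of consonant triads: major triads `⟨x, x+4, x+7⟩` and
minor triads `⟨x+7, x+3, x⟩`. -/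
def Triads : Set T3 :=
  {t | (∃ x : PC, t = (x, x + 4, x + 7)) ∨ (∃ x : PC, t = (x + 7, x + 3, x))}

instance : DecidablePred (· ∈ Triads) := fun t =>
  decidable_of_iff ((∃ x : PC, t = (x, x + 4, x + 7)) ∨ (∃ x : PC, t = (x + 7, x + 3, x)))
    Iff.rfl

/-- Transposition `T_n`, componentwise on triples. -/
def Tfun (n : PC) (t : T3) : T3 := (t.1 + n, t.2.1 + n, t.2.2 + n)

/-- Inversion `I_n`, componentwise on triples. -/
def Ifun (n : PC) (t : T3) : T3 := (-t.1 + n, -t.2.1 + n, -t.2.2 + n)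

/-- The parallel transformation `P⟨x₁,x₂,x₃⟩ = I_{x₁+x₃}⟨x₁,x₂,x₃⟩`. -/
def Pfun (t : T3) : T3 := Ifun (t.1 + t.2.2) t

/-- The leading-tone-exchange `L⟨x₁,x₂,x₃⟩ = I_{x₂+x₃}⟨x₁,x₂,x₃⟩`. -/
def Lfun (t : T3) : T3 := Ifun (t.2.1 + t.2.2) t

lemma Tfun_mem (n : PC) (t : T3) (h : t ∈ Triads) : Tfun n t ∈ Triads := by
  rcases h with ⟨x, rfl⟩ | ⟨x, rfl⟩
  · exact Or.inl ⟨x + n, by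
      simp only [Tfun, Prod.mk.injEq]; refine ⟨?_, ?_, ?_⟩ <;> first | trivial | ring⟩
  · exact Or.inr ⟨x + n, by
      simp only [Tfun, Prod.mk.injEq]; refine ⟨?_, ?_, ?_⟩ <;> first | trivial | ring⟩

lemma Ifun_mem (n : PC) (t : T3) (h : t ∈ Triads) : Ifun n t ∈ Triads := by
  rcases h with ⟨x, rfl⟩ | ⟨x, rfl⟩
  · exact Or.inr ⟨-x + n - 7,
      by simp only [Ifun, Prod.mk.injEq]; exact ⟨by ring, by ring, by ring⟩⟩
  · exact Or.inl ⟨-x + n - 7,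
      by simp only [Ifun, Prod.mk.injEq]; exact ⟨by ring, by ring, by ring⟩⟩

lemma Pfun_mem (t : T3) (h : t ∈ Triads) : Pfun t ∈ Triads := by
  rcases h with ⟨x, rfl⟩ | ⟨x, rfl⟩
  · exact Or.inr ⟨x,
      by simp only [Pfun, Ifun, Prod.mk.injEq]; exact ⟨by ring, by ring, by ring⟩⟩
  · exact Or.inl ⟨x,
      by simp only [Pfun, Ifun, Prod.mk.injEq]; exact ⟨by ring, by ring, by ring⟩⟩

lemma Lfun_mem (t : T3) (h : t ∈ Triads) : Lfun t ∈ Triads := by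
  rcases h with ⟨x, rfl⟩ | ⟨x, rfl⟩
  · exact Or.inr ⟨x + 4,
      by simp only [Lfun, Ifun, Prod.mk.injEq]; exact ⟨by ring, by ring, by ring⟩⟩
  · exact Or.inl ⟨x - 4,
      by simp only [Lfun, Ifun, Prod.mk.injEq]; exact ⟨by ring, by ring, by ring⟩⟩

lemma Tfun_neg (n : PC) (t : T3) : Tfun (-n) (Tfun n t) = t := by
  simp only [Tfun]; exact Prod.ext (by ring) (Prod.ext (by ring) (by ring))

lemma Ifun_invol (n : PC) (t : T3) : Ifun n (Ifun n t) = t := by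
  simp only [Ifun]; exact Prod.ext (by ring) (Prod.ext (by ring) (by ring))

lemma Pfun_invol (t : T3) : Pfun (Pfun t) = t := by
  simp only [Pfun, Ifun]; exact Prod.ext (by ring) (Prod.ext (by ring) (by ring))

lemma Lfun_invol (t : T3) : Lfun (Lfun t) = t := by
  simp only [Lfun, Ifun]; exact Prod.ext (by ring) (Prod.ext (by ring) (by ring))

/-- Transposition `T_n` as a bijection of the set of consonant triads. -/
def Tperm (n : PC) : Equiv.Perm ↥Triads where
  toFun t := ⟨Tfun n t, Tfun_mem n t t.2⟩
  invFun t := ⟨Tfun (-n) t, Tfun_mem (-n) t t.2⟩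
  left_inv t := Subtype.ext (Tfun_neg n t)
  right_inv t := Subtype.ext (by simpa using Tfun_neg (-n) t)

/-- Inversion `I_n` as a bijection of the set of consonant triads. -/
def Iperm (n : PC) : Equiv.Perm ↥Triads :=
  Function.Involutive.toPerm (fun t => ⟨Ifun n t, Ifun_mem n t t.2⟩)
    (fun t => Subtype.ext (Ifun_invol n t))

/-- `P` as a bijection of the set of consonant triads. -/
def Pperm : Equiv.Perm ↥Triads :=
  Function.Involutive.toPerm (fun t => ⟨Pfun t, Pfun_mem t t.2⟩)
    (fun t => Subtype.ext (Pfun_invol t))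

/-- `L` as a bijection of the set of consonant triads. -/
def Lperm : Equiv.Perm ↥Triads :=
  Function.Involutive.toPerm (fun t => ⟨Lfun t, Lfun_mem t t.2⟩)
    (fun t => Subtype.ext (Lfun_invol t))

/-- As elements of the symmetric group `Sym(Triads)`, the bijections `P` and `L`
commute with every transposition `T_n` and every inversion `I_n` (`n ∈ ℤ/12`). -/
theorem P_L_commute_with_T_I (n : PC) :
    Pperm * Tperm n = Tperm n * Pperm ∧
    Pperm * Iperm n = Iperm n * Pperm ∧
    Lperm * Tperm n = Tperm n * Lperm ∧
    Lperm * Iperm n = Iperm n * Lperm := by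
  refine ⟨?_, ?_, ?_, ?_⟩ <;>
  · ext t <;>
    · simp only [Pperm, Lperm, Tperm, Iperm, Function.Involutive.toPerm, Equiv.Perm.mul_apply,
        Equiv.coe_fn_mk, Pfun, Lfun, Tfun, Ifun]
      ring
end

section
/- Let S be a (not necessarily finite) set, and let G and H be subgroups of Sym(S) such that G acts simply transitively on S, H acts transitively on S, and every element of G commutes with every element of H. Then H acts simply transitively on S, H equals the centralizer of G in Sym(S), and G equals the centralizer of H in Sym(S); in particular G and H are dual groups in the sense of Lewin. -/
/-- An element commuting with a transitive subgroup and fixing a point is the identity. -/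
lemma eq_one_of_commutes_of_fix {S : Type*} (K : Subgroup (Equiv.Perm S))
    (hK : ∀ Y Z : S, ∃ k : K, (k : Equiv.Perm S) Y = Z)
    (π : Equiv.Perm S) (hπ : ∀ k ∈ K, π * k = k * π)
    (Y₀ : S) (h0 : π Y₀ = Y₀) : π = 1 := by
  ext W
  obtain ⟨k, hk⟩ := hK Y₀ W
  have hc := congrArg (fun e : Equiv.Perm S => e Y₀) (hπ k k.2)
  simp only [Equiv.Perm.mul_apply] at hc
  calc π W = π ((k : Equiv.Perm S) Y₀) := by rw [hk]
    _ = (k : Equiv.Perm S) (π Y₀) := hc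
    _ = (k : Equiv.Perm S) Y₀ := by rw [h0]
    _ = W := hk

/-- Let `S` be a (not necessarily finite) set, `G, H ≤ Sym(S)` with `G` acting simply
transitively, `H` acting transitively, and `G` and `H` commuting elementwise. Then `H`
acts simply transitively, `H = C(G)` and `G = C(H)`; i.e. `G` and `H` are dual groups
in the sense of Lewin. -/
theorem dual_groups_of_commuting
    {S : Type*} (G H : Subgroup (Equiv.Perm S))
    (hG : ∀ Y Z : S, ∃! g : G, (g : Equiv.Perm S) Y = Z)
    (hH : ∀ Y Z : S, ∃ h : H, (h : Equiv.Perm S) Y = Z)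
    (hcomm : ∀ g ∈ G, ∀ h ∈ H, g * h = h * g) :
    (∀ Y Z : S, ∃! h : H, (h : Equiv.Perm S) Y = Z) ∧
      H = Subgroup.centralizer (G : Set (Equiv.Perm S)) ∧
      G = Subgroup.centralizer (H : Set (Equiv.Perm S)) := by
  classical
  rcases isEmpty_or_nonempty S with hS | hS
  · have hsub : Subsingleton (Equiv.Perm S) := by
      constructor; intro a b; ext x; exact (hS.false x).elim
    refine ⟨fun Y => (hS.false Y).elim, ?_, ?_⟩ <;>
    · ext x
      simp only [Subgroup.mem_centralizer_iff]
      constructor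
      · intro _; intro m _; exact Subsingleton.elim _ _
      · intro _
        have : x = (1 : Equiv.Perm S) := Subsingleton.elim _ _
        rw [this]; exact Subgroup.one_mem _
  · obtain ⟨Y₀⟩ := hS
    have hGtr : ∀ Y Z : S, ∃ g : G, (g : Equiv.Perm S) Y = Z :=
      fun Y Z => ⟨(hG Y Z).choose, (hG Y Z).choose_spec.1⟩
    -- H acts simply transitively
    have hHst : ∀ Y Z : S, ∃! h : H, (h : Equiv.Perm S) Y = Z := by
      intro Y Z
      obtain ⟨h, hh⟩ := hH Y Z
      refine ⟨h, hh, ?_⟩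
      intro h' hh'
      have hmem : ((h : Equiv.Perm S)⁻¹ * (h' : Equiv.Perm S)) ∈ H :=
        H.mul_mem (H.inv_mem h.2) h'.2
      have hπ : ∀ g ∈ G, ((h : Equiv.Perm S)⁻¹ * h') * g = g * ((h : Equiv.Perm S)⁻¹ * h') :=
        fun g hg => (hcomm g hg _ hmem).symm
      have hfix : ((h : Equiv.Perm S)⁻¹ * (h' : Equiv.Perm S)) Y = Y := by
        simp only [Equiv.Perm.mul_apply, hh']
        rw [← hh]; simp
      have := eq_one_of_commutes_of_fix G hGtr _ hπ Y hfix
      have : (h' : Equiv.Perm S) = (h : Equiv.Perm S) := by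
        have := congrArg (fun e => (h : Equiv.Perm S) * e) this
        simpa [mul_assoc] using this
      exact Subtype.ext this
    refine ⟨hHst, ?_, ?_⟩
    · -- H = C(G)
      ext x
      simp only [Subgroup.mem_centralizer_iff]
      constructor
      · intro hx g hg; exact hcomm g hg x hx
      · intro hx
        obtain ⟨h, hh⟩ := hH Y₀ (x Y₀)
        have hmem : ((h : Equiv.Perm S)⁻¹ * x) ∈ Subgroup.centralizer (G : Set (Equiv.Perm S)) := by
          exact Subgroup.mul_mem _ (Subgroup.inv_mem _ (by
            rw [Subgroup.mem_centralizer_iff]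
            intro g hg; exact hcomm g hg _ h.2)) (by
            rw [Subgroup.mem_centralizer_iff]; exact hx)
        have hπ : ∀ g ∈ G, ((h : Equiv.Perm S)⁻¹ * x) * g = g * ((h : Equiv.Perm S)⁻¹ * x) := by
          intro g hg
          exact (Subgroup.mem_centralizer_iff.mp hmem g hg).symm
        have hfix : ((h : Equiv.Perm S)⁻¹ * x) Y₀ = Y₀ := by
          simp only [Equiv.Perm.mul_apply]
          rw [← hh]; simp
        have h1 := eq_one_of_commutes_of_fix G hGtr _ hπ Y₀ hfix
        have hx' : x = (h : Equiv.Perm S) := by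
          have := congrArg (fun e => (h : Equiv.Perm S) * e) h1
          simpa [mul_assoc] using this
        rw [hx']; exact h.2
    · -- G = C(H)
      ext x
      simp only [Subgroup.mem_centralizer_iff]
      constructor
      · intro hx h hh; exact (hcomm x hx h hh).symm
      · intro hx
        obtain ⟨g, hg⟩ := hGtr Y₀ (x Y₀)
        have hπ : ∀ k ∈ H, ((g : Equiv.Perm S)⁻¹ * x) * k = k * ((g : Equiv.Perm S)⁻¹ * x) := by
          intro k hk
          have h1 : x * k = x * k := rfl
          have h1' : k * x = x * k := hx k hk
          have h2 : (g : Equiv.Perm S) * k = k * g := hcomm g g.2 k hk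
          have h3 : (g : Equiv.Perm S)⁻¹ * k = k * (g : Equiv.Perm S)⁻¹ :=
            (Commute.inv_left h2)
          rw [mul_assoc, ← h1', ← mul_assoc, h3, mul_assoc]
        have hfix : ((g : Equiv.Perm S)⁻¹ * x) Y₀ = Y₀ := by
          simp only [Equiv.Perm.mul_apply]
          rw [← hg]; simp
        have h1 := eq_one_of_commutes_of_fix H hH _ hπ Y₀ hfix
        have hx' : x = (g : Equiv.Perm S) := by
          have := congrArg (fun e => (g : Equiv.Perm S) * e) h1
          simpa [mul_assoc] using this
        rw [hx']; exact g.2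
end
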